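/- arXiv:0705.3918 — 2 statements merged into one kernel-verified Lean document; each statement's English description precedes it below -/
import Mathlib

section
/- Let Φ be a Leonard system in A and let ⟨·,·⟩ be the bilinear form on the irreducible A-module V associated with the antiautomorphism † of Φ. Then ⟨·,·⟩ is symmetric. -/
/-!
Write `B u v = uᵀ G v`. Compatibility with `†` reads `Xᵀ G = G X†`; as `†` is onto, the kernel
of `G` is stable under all matrices, so `G` is invertible. Then `G⁻¹ Gᵀ` commutes with `A` and
`A*`, which `†` fixes, so it is a scalar `c`: it preserves every one-dimensional eigenspace
`E i V` of `A`, and `E i A* E (i+1) ≠ 0` forces the eigenvalues on neighbouring ones to agree.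
Hence `Gᵀ = c G`. Finally `†` fixes the primitive idempotent `E 0 = v wᵀ`, and
`E 0ᵀ G E 0 = G E 0 ≠ 0` gives `vᵀ G v ≠ 0`, which forces `c = 1`.
-/

open Matrix Polynomial

/-- A Leonard system in the matrix algebra `Mat_{d+1}(K)`: multiplicity-free
elements `A`, `Astar` with orderings `E`, `Estar` of their primitive idempotents
satisfying the irreducible-tridiagonality conditions. -/
structure LeonardSystem (K : Type*) [Field K] (d : ℕ) where
  A : Matrix (Fin (d+1)) (Fin (d+1)) K
  Astar : Matrix (Fin (d+1)) (Fin (d+1)) K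
  E : Fin (d+1) → Matrix (Fin (d+1)) (Fin (d+1)) K
  Estar : Fin (d+1) → Matrix (Fin (d+1)) (Fin (d+1)) K
  θ : Fin (d+1) → K
  θs : Fin (d+1) → K
  θ_inj : Function.Injective θ
  θs_inj : Function.Injective θs
  E_ne : ∀ i, E i ≠ 0
  Es_ne : ∀ i, Estar i ≠ 0
  E_mul : ∀ i j, E i * E j = if i = j then E i else 0
  Es_mul : ∀ i j, Estar i * Estar j = if i = j then Estar i else 0
  E_sum : ∑ i, E i = 1
  Es_sum : ∑ i, Estar i = 1
  A_eq : A = ∑ i, θ i • E i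
  As_eq : Astar = ∑ i, θs i • Estar i
  trid0 : ∀ i j : Fin (d+1), ((i : ℤ) - (j : ℤ)).natAbs > 1 → E i * Astar * E j = 0
  trid1 : ∀ i j : Fin (d+1), ((i : ℤ) - (j : ℤ)).natAbs = 1 → E i * Astar * E j ≠ 0
  strid0 : ∀ i j : Fin (d+1), ((i : ℤ) - (j : ℤ)).natAbs > 1 → Estar i * A * Estar j = 0
  strid1 : ∀ i j : Fin (d+1), ((i : ℤ) - (j : ℤ)).natAbs = 1 → Estar i * A * Estar j ≠ 0

namespace LeonardSystem

variable {K : Type*} [Field K] {d : ℕ}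

/-- Eigenvalues indexed by `ℕ` (junk value outside range). -/
def θN (L : LeonardSystem K d) (i : ℕ) : K := if h : i < d + 1 then L.θ ⟨i, h⟩ else 0

def θsN (L : LeonardSystem K d) (i : ℕ) : K := if h : i < d + 1 then L.θs ⟨i, h⟩ else 0

/-- `τ_i(A) = (A-θ₀)(A-θ₁)⋯(A-θ_{i-1})`. -/
def tauA (L : LeonardSystem K d) : ℕ → Matrix (Fin (d+1)) (Fin (d+1)) K
  | 0 => 1
  | i + 1 => L.tauA i * (L.A - L.θN i • 1)

/-- `η_i(A) = (A-θ_d)(A-θ_{d-1})⋯(A-θ_{d-i+1})`. -/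
def etaA (L : LeonardSystem K d) : ℕ → Matrix (Fin (d+1)) (Fin (d+1)) K
  | 0 => 1
  | i + 1 => L.etaA i * (L.A - L.θN (d - i) • 1)

/-- `τ*_i(A*)`. -/
def tausA (L : LeonardSystem K d) : ℕ → Matrix (Fin (d+1)) (Fin (d+1)) K
  | 0 => 1
  | i + 1 => L.tausA i * (L.Astar - L.θsN i • 1)

/-- `η*_i(A*)`. -/
def etasA (L : LeonardSystem K d) : ℕ → Matrix (Fin (d+1)) (Fin (d+1)) K
  | 0 => 1
  | i + 1 => L.etasA i * (L.Astar - L.θsN (d - i) • 1)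

/-- Scalar `τ_i(x)`. -/
def tauS (L : LeonardSystem K d) (i : ℕ) (x : K) : K := ∏ j ∈ Finset.range i, (x - L.θN j)

/-- Scalar `η_i(x)`. -/
def etaS (L : LeonardSystem K d) (i : ℕ) (x : K) : K := ∏ j ∈ Finset.range i, (x - L.θN (d - j))

/-- Scalar `τ*_i(x)`. -/
def tausS (L : LeonardSystem K d) (i : ℕ) (x : K) : K := ∏ j ∈ Finset.range i, (x - L.θsN j)

/-- Scalar `η*_i(x)`. -/
def etasS (L : LeonardSystem K d) (i : ℕ) (x : K) : K := ∏ j ∈ Finset.range i, (x - L.θsN (d - j))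

/-- First split sequence `φ_i`. -/
noncomputable def varphi (L : LeonardSystem K d) (i : ℕ) : K :=
  (L.θsN 0 - L.θsN i) * (L.tauA i * L.Estar 0).trace / (L.tauA (i-1) * L.Estar 0).trace

/-- Second split sequence `ϕ_i`. -/
noncomputable def phi (L : LeonardSystem K d) (i : ℕ) : K :=
  (L.θsN 0 - L.θsN i) * (L.etaA i * L.Estar 0).trace / (L.etaA (i-1) * L.Estar 0).trace

/-- `φ₁φ₂⋯φ_r`. -/
noncomputable def varphiProd (L : LeonardSystem K d) (r : ℕ) : K :=
  ∏ j ∈ Finset.range r, L.varphi (j + 1)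

/-- `ϕ₁ϕ₂⋯ϕ_r`. -/
noncomputable def phiProd (L : LeonardSystem K d) (r : ℕ) : K :=
  ∏ j ∈ Finset.range r, L.phi (j + 1)

/-- `φ_d φ_{d-1} ⋯ φ_{d-r+1}`. -/
noncomputable def varphiRevProd (L : LeonardSystem K d) (r : ℕ) : K :=
  ∏ j ∈ Finset.range r, L.varphi (d - j)

/-- `ϕ_d ϕ_{d-1} ⋯ ϕ_{d-r+1}`. -/
noncomputable def phiRevProd (L : LeonardSystem K d) (r : ℕ) : K :=
  ∏ j ∈ Finset.range r, L.phi (d - j)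

end LeonardSystem

section Idempotents

variable {K R ι : Type*} [Field K] [Ring R] [Algebra K R] [Fintype ι]

theorem mul_eq_zero_of_mul_eq_smul_of_ne {a b : K} (hab : a ≠ b) {e x f : R}
    (he : e * x = a • e) (hf : x * f = b • f) : e * f = 0 := by
  have h : a • (e * f) = b • (e * f) := by
    rw [← smul_mul_assoc, ← he, mul_assoc, hf, mul_smul_comm]
  rw [← sub_eq_zero, ← sub_smul] at h
  exact (smul_eq_zero.mp h).resolve_left (sub_ne_zero.mpr hab)

theorem eq_of_sum_eq_one_of_mul_eq_zero {e f : ι → R} (he : ∑ i, e i = 1) (hf : ∑ i, f i = 1)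
    (h : ∀ i j, i ≠ j → e i * f j = 0) (i : ι) : e i = f i := by
  classical
  calc e i = e i * ∑ j, f j := by rw [hf, mul_one]
    _ = e i * f i := by
      rw [Finset.mul_sum, Finset.sum_eq_single i (fun j _ hj ↦ h i j hj.symm) (by simp)]
    _ = (∑ j, e j) * f i := by
      rw [Finset.sum_mul, Finset.sum_eq_single i (fun j _ hj ↦ h j i hj) (by simp)]
    _ = f i := by rw [he, one_mul]

theorem OrthogonalIdempotents.mul_sum_smul {e : ι → R} (he : OrthogonalIdempotents e)
    (θ : ι → K) (i : ι) : e i * ∑ j, θ j • e j = θ i • e i := by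
  classical
  simp [Finset.mul_sum, he.mul_eq]

theorem OrthogonalIdempotents.sum_smul_mul {e : ι → R} (he : OrthogonalIdempotents e)
    (θ : ι → K) (i : ι) : (∑ j, θ j • e j) * e i = θ i • e i := by
  classical
  simp [Finset.sum_mul, he.mul_eq]

namespace CompleteOrthogonalIdempotents

variable {e : ι → R} {θ : ι → K}

theorem commute_of_commute_sum_smul (he : CompleteOrthogonalIdempotents e)
    (hθ : Function.Injective θ) {h : R} (hh : Commute h (∑ j, θ j • e j)) (i : ι) :
    Commute h (e i) := by
  classical
  have hoff : ∀ i j, i ≠ j → e i * (h * e j) = 0 := fun i j hij ↦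
    mul_eq_zero_of_mul_eq_smul_of_ne (hθ.ne hij) (he.mul_sum_smul θ i) (by
      rw [← mul_assoc, ← hh.eq, mul_assoc, he.sum_smul_mul, mul_smul_comm])
  have hleft : h * e i = e i * h * e i := by
    calc h * e i = (∑ j, e j) * (h * e i) := by rw [he.complete, one_mul]
      _ = e i * h * e i := by
        rw [Finset.sum_mul, Finset.sum_eq_single i (fun j _ hj ↦ hoff j i hj) (by simp),
          mul_assoc]
  have hright : e i * h = e i * h * e i := by
    calc e i * h = e i * h * ∑ j, e j := by rw [he.complete, mul_one]
      _ = e i * h * e i := by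
        simp_rw [Finset.mul_sum, mul_assoc]
        exact Finset.sum_eq_single i (fun j _ hj ↦ hoff i j hj.symm) (by simp)
  exact hleft.trans hright.symm

theorem map_eq_self_of_map_sum_smul_eq (he : CompleteOrthogonalIdempotents e)
    (hθ : Function.Injective θ) (σ : R →ₗ[K] R) (hσ : ∀ x y, σ (x * y) = σ y * σ x)
    (hσ1 : σ 1 = 1) (hfix : σ (∑ j, θ j • e j) = ∑ j, θ j • e j) (i : ι) : σ (e i) = e i := by
  refine (eq_of_sum_eq_one_of_mul_eq_zero (f := fun j ↦ σ (e j)) he.complete ?_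
    (fun i j hij ↦ ?_) i).symm
  · rw [← map_sum, he.complete, hσ1]
  · refine mul_eq_zero_of_mul_eq_smul_of_ne (hθ.ne hij) (he.mul_sum_smul θ i) ?_
    rw [← hfix, ← hσ, he.mul_sum_smul, map_smul]

end CompleteOrthogonalIdempotents

theorem map_one_of_map_mul_eq_mul_map {σ : R → R} (hσ : ∀ x y, σ (x * y) = σ y * σ x)
    (hsurj : Function.Surjective σ) : σ 1 = 1 := by
  obtain ⟨y, hy⟩ := hsurj 1
  calc σ 1 = σ 1 * σ y := by rw [hy, mul_one]
    _ = 1 := by rw [← hσ, mul_one, hy]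

end Idempotents

section RankOne

variable {K ι n : Type*} [Field K] [Fintype ι] [Fintype n]

theorem Matrix.vecMulVec_mul_mul_vecMulVec (v w : n → K) (X : Matrix n n K) :
    vecMulVec v w * X * vecMulVec v w = (w ᵥ* X ⬝ᵥ v) • vecMulVec v w := by
  rw [vecMulVec_mul, vecMulVec_mul_vecMulVec, vecMulVec_smul]

theorem Matrix.dotProduct_eq_one_of_isIdempotentElem_vecMulVec {v w : n → K}
    (h : IsIdempotentElem (vecMulVec v w)) (h0 : vecMulVec v w ≠ 0) : w ⬝ᵥ v = 1 := by
  rw [IsIdempotentElem, vecMulVec_mul_vecMulVec, vecMulVec_smul] at h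
  exact smul_left_injective K h0 (h.trans (one_smul K _).symm)

/-- Nonzero vectors `x i ∈ range (E i)` are linearly independent, hence a basis when there are
as many idempotents as dimensions; in that basis `E i` is the `i`-th coordinate projection. -/
theorem CompleteOrthogonalIdempotents.exists_eq_vecMulVec [DecidableEq n] {E : ι → Matrix n n K}
    (hE : CompleteOrthogonalIdempotents E) (hne : ∀ i, E i ≠ 0)
    (hcard : Fintype.card ι = Fintype.card n) (i : ι) :
    ∃ v w : n → K, w ⬝ᵥ v = 1 ∧ E i = vecMulVec v w := by
  classical
  have hx : ∀ j, ∃ u, E j *ᵥ u ≠ 0 := fun j ↦ by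
    by_contra! h
    exact hne j (Matrix.toLin'.injective (LinearMap.ext fun u ↦ by simpa using h u))
  choose u hu using hx
  set x : ι → n → K := fun j ↦ E j *ᵥ u j
  have hEx : ∀ k j, E k *ᵥ x j = if k = j then x j else 0 := fun k j ↦ by
    simp only [x, mulVec_mulVec, hE.mul_eq]
    split_ifs <;> simp_all
  have hli : LinearIndependent K x := by
    refine Fintype.linearIndependent_iff.mpr fun g hg k ↦ ?_
    have := congrArg (E k *ᵥ ·) hg
    simp only [mulVec_sum, mulVec_smul, hEx, smul_ite, smul_zero, Finset.sum_ite_eq,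
      Finset.mem_univ, if_true, mulVec_zero] at this
    exact (smul_eq_zero.mp this).resolve_right (hu k)
  have : Nonempty ι := ⟨i⟩
  let b := basisOfLinearIndependentOfCardEqFinrank hli (by simp [hcard])
  have hEb : ∀ z, E i *ᵥ z = b.repr z i • x i := fun z ↦ by
    conv_lhs => rw [← b.sum_repr z]
    simp [b, mulVec_sum, mulVec_smul, hEx]
  have hvw : E i = vecMulVec (x i) fun k ↦ b.repr (Pi.single k 1) i := by
    ext a k
    simpa [vecMulVec_apply, mul_comm] using congrFun (hEb (Pi.single k 1)) a
  exact ⟨_, _, dotProduct_eq_one_of_isIdempotentElem_vecMulVec (hvw ▸ hE.idem i)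
    (hvw ▸ hne i), hvw⟩

end RankOne

section GramMatrix

variable {K n : Type*} [Field K] [Fintype n]

theorem Matrix.transpose_eq_self_of_transpose_eq_smul {G : Matrix n n K} {c : K}
    (hc : Gᵀ = c • G) {v : n → K} (hv : v ⬝ᵥ G *ᵥ v ≠ 0) : Gᵀ = G := by
  have : c * (v ⬝ᵥ G *ᵥ v) = 1 * (v ⬝ᵥ G *ᵥ v) := by
    rw [one_mul, ← smul_eq_mul, ← dotProduct_smul, ← smul_mulVec, ← hc, mulVec_transpose,
      dotProduct_comm, dotProduct_mulVec]
  rw [hc, mul_right_cancel₀ hv this, one_smul]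

variable [DecidableEq n]

theorem LinearMap.transpose_mul_toMatrix₂' {B : (n → K) →ₗ[K] (n → K) →ₗ[K] K}
    {X Y : Matrix n n K} (h : ∀ u v, B (X *ᵥ u) v = B u (Y *ᵥ v)) :
    Xᵀ * toMatrix₂' K B = toMatrix₂' K B * Y := by
  have hB : B.comp (toLin' X) = B.compl₂ (toLin' Y) := by
    ext u v
    simpa using h (Pi.single u 1) (Pi.single v 1)
  simpa [toMatrix₂'_comp, toMatrix₂'_compl₂] using congrArg (toMatrix₂' K) hB

/-- The kernel of `G` is invariant under every matrix, and matrices act transitively on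
nonzero vectors. -/
theorem Matrix.isUnit_of_forall_exists_mul_eq_mul {G : Matrix n n K} (hG : G ≠ 0)
    (h : ∀ Y, ∃ X, G * Y = X * G) : IsUnit G := by
  rw [isUnit_iff_isUnit_det, isUnit_iff_ne_zero]
  intro hdet
  obtain ⟨v, hv0, hv⟩ := exists_mulVec_eq_zero_iff.mpr hdet
  obtain ⟨k, hk⟩ := Function.ne_iff.mp hv0
  refine hG (toLin'.injective (LinearMap.ext fun u ↦ ?_))
  obtain ⟨X, hX⟩ := h (vecMulVec u (Pi.single k (v k)⁻¹))
  have := congrArg (· *ᵥ v) hX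
  simp only [← mulVec_mulVec, hv, mulVec_zero, vecMulVec_mulVec, single_dotProduct,
    inv_mul_cancel₀ hk] at this
  simpa using this

theorem Matrix.commute_inv_mul_transpose {G M : Matrix n n K} (hG : IsUnit G)
    (h : Mᵀ * G = G * M) : Commute (G⁻¹ * Gᵀ) M := by
  have hinv : G⁻¹ * Mᵀ = M * G⁻¹ := by
    let := hG.invertible
    rw [inv_mul_eq_iff_eq_mul_of_invertible, ← mul_assoc, ← h, mul_assoc,
      mul_inv_of_invertible, mul_one]
  have ht : Gᵀ * M = Mᵀ * Gᵀ := by simpa using congrArg transpose h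
  calc G⁻¹ * Gᵀ * M = G⁻¹ * Mᵀ * Gᵀ := by rw [mul_assoc, ht, mul_assoc]
    _ = M * (G⁻¹ * Gᵀ) := by rw [hinv, mul_assoc]

theorem Matrix.dotProduct_mulVec_ne_zero_of_transpose_mul_eq {G : Matrix n n K} (hG : IsUnit G)
    {v w : n → K} (hwv : w ⬝ᵥ v = 1) (h : (vecMulVec v w)ᵀ * G = G * vecMulVec v w) :
    v ⬝ᵥ G *ᵥ v ≠ 0 := by
  intro h0
  have hGE : G * vecMulVec v w = 0 := by
    calc G * vecMulVec v w = G * vecMulVec v w * vecMulVec v w := by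
          rw [mul_assoc, vecMulVec_mul_vecMulVec, hwv, one_smul]
      _ = 0 := by
          rw [← h, transpose_vecMulVec, vecMulVec_mul, vecMulVec_mul_vecMulVec,
            ← dotProduct_mulVec, h0, zero_smul, vecMulVec_zero]
  have hv : vecMulVec v w *ᵥ v = v := by rw [vecMulVec_mulVec, hwv]; simp
  rw [hG.mul_right_eq_zero.mp hGE, zero_mulVec] at hv
  simp [← hv] at hwv

end GramMatrix

namespace LeonardSystem

variable {K : Type*} [Field K] {d : ℕ}

theorem completeOrthogonalIdempotents_E (L : LeonardSystem K d) :
    CompleteOrthogonalIdempotents L.E := by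
  refine CompleteOrthogonalIdempotents.iff_ortho_complete.mpr ⟨fun i j hij ↦ ?_, L.E_sum⟩
  simpa [hij] using L.E_mul i j

theorem exists_E_eq_vecMulVec (L : LeonardSystem K d) (i : Fin (d + 1)) :
    ∃ v w : Fin (d + 1) → K, w ⬝ᵥ v = 1 ∧ L.E i = vecMulVec v w :=
  L.completeOrthogonalIdempotents_E.exists_eq_vecMulVec L.E_ne rfl i

theorem eq_smul_one_of_commute (L : LeonardSystem K d) {h : Matrix (Fin (d + 1)) (Fin (d + 1)) K}
    (hA : Commute h L.A) (hAs : Commute h L.Astar) : ∃ c : K, h = c • 1 := by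
  have hE := L.completeOrthogonalIdempotents_E
  have hcomm : ∀ i, Commute h (L.E i) :=
    hE.commute_of_commute_sum_smul L.θ_inj (L.A_eq ▸ hA)
  have hscalar : ∀ i, ∃ c : K, h * L.E i = c • L.E i := fun i ↦ by
    obtain ⟨v, w, -, hvw⟩ := L.exists_E_eq_vecMulVec i
    refine ⟨w ᵥ* h ⬝ᵥ v, ?_⟩
    rw [hvw, ← vecMulVec_mul_mul_vecMulVec, ← hvw, ← (hcomm i).eq, mul_assoc, (hE.idem i).eq]
  choose c hc using hscalar
  have hadj : ∀ i j : Fin (d + 1), ((i : ℤ) - j).natAbs = 1 → c i = c j := fun i j hij ↦ by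
    refine smul_left_injective K (L.trid1 i j hij) ?_
    calc c i • (L.E i * L.Astar * L.E j) = L.E i * h * L.Astar * L.E j := by
          rw [← (hcomm i).eq, hc, smul_mul_assoc, smul_mul_assoc]
      _ = c j • (L.E i * L.Astar * L.E j) := by
          rw [mul_assoc (L.E i), hAs.eq, ← mul_assoc, mul_assoc, hc, mul_smul_comm]
  have hconst : ∀ i, c i = c 0 := Fin.induction rfl fun i hi ↦
    (hadj i.succ i.castSucc (by simp)).trans hi
  refine ⟨c 0, ?_⟩
  calc h = h * ∑ i, L.E i := by rw [L.E_sum, mul_one]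
    _ = c 0 • 1 := by simp_rw [Finset.mul_sum, hc, hconst, ← Finset.smul_sum, L.E_sum]

end LeonardSystem

/-- The bilinear form associated with the antiautomorphism `†` of a Leonard
system is symmetric. -/
theorem LeonardSystem.bilin_symm {K : Type*} [Field K] {d : ℕ}
    (L : LeonardSystem K d)
    (σ : (Matrix (Fin (d+1)) (Fin (d+1)) K) →ₗ[K] Matrix (Fin (d+1)) (Fin (d+1)) K)
    (hanti : ∀ X Y, σ (X * Y) = σ Y * σ X) (hbij : Function.Bijective σ)
    (hA : σ L.A = L.A) (hAs : σ L.Astar = L.Astar)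
    (B : (Fin (d+1) → K) →ₗ[K] (Fin (d+1) → K) →ₗ[K] K) (hB : B ≠ 0)
    (hcomp : ∀ (X : Matrix (Fin (d+1)) (Fin (d+1)) K) (u v : Fin (d+1) → K),
      B (X.mulVec u) v = B u ((σ X).mulVec v)) :
    ∀ u v, B u v = B v u := by
  set G := LinearMap.toMatrix₂' K B
  have hBG : ∀ u v, B u v = u ⬝ᵥ G *ᵥ v := fun u v ↦ by
    rw [← toLinearMap₂'_apply', toLinearMap₂'_toMatrix']
  have hG : ∀ X, Xᵀ * G = G * σ X := fun X ↦ LinearMap.transpose_mul_toMatrix₂' (hcomp X)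
  have hGu : IsUnit G := isUnit_of_forall_exists_mul_eq_mul
    ((LinearMap.toMatrix₂' K).map_ne_zero_iff.mpr hB)
    fun Y ↦ (hbij.2 Y).elim fun X hX ↦ ⟨Xᵀ, by rw [hG, hX]⟩
  obtain ⟨c, hc⟩ := L.eq_smul_one_of_commute
    (commute_inv_mul_transpose hGu (by rw [hG, hA]))
    (commute_inv_mul_transpose hGu (by rw [hG, hAs]))
  have hGc : Gᵀ = c • G := by
    rw [← mul_nonsing_inv_cancel_left (A := G) Gᵀ ((isUnit_iff_isUnit_det G).mp hGu), hc,
      mul_smul_comm, mul_one]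
  obtain ⟨v, w, hwv, hvw⟩ := L.exists_E_eq_vecMulVec 0
  have hσE : σ (L.E 0) = L.E 0 :=
    L.completeOrthogonalIdempotents_E.map_eq_self_of_map_sum_smul_eq L.θ_inj σ hanti
      (map_one_of_map_mul_eq_mul_map hanti hbij.2) (L.A_eq ▸ hA) 0
  have hsymm : Gᵀ = G := transpose_eq_self_of_transpose_eq_smul hGc
    (dotProduct_mulVec_ne_zero_of_transpose_mul_eq hGu hwv (by rw [← hvw, hG, hσE]))
  intro u v
  rw [hBG, hBG, dotProduct_mulVec, ← mulVec_transpose, hsymm, dotProduct_comm]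
end

section
/- Let Φ be a Leonard system with bilinear form ⟨·,·⟩ and nonzero vectors ξ_0 ∈ E_0V, ξ*_0 ∈ E*_0V. Then ⟨ξ_0, ξ*_0⟩² = tr(E_0 E*_0) · ⟨ξ_0, ξ_0⟩ · ⟨ξ*_0, ξ*_0⟩. -/
open Matrix Polynomial

/-! `E₀` and `E*₀` are primitive idempotents of `Mat_{d+1}(K)`, hence of rank one:
`E₀ = ξ₀ wᵀ` and `E*₀ = ξ*₀ w*ᵀ`. So `E₀ ξ*₀ = a ξ₀`, `E*₀ ξ₀ = b ξ*₀`
and `tr (E₀ E*₀) = a b`. As Lagrange polynomials in `A` and `A*`, both idempotents are fixed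
by `†`, which gives `⟨ξ₀, ξ*₀⟩ = ⟨ξ₀, E₀ ξ*₀⟩ = a ⟨ξ₀, ξ₀⟩` and
`⟨ξ₀, ξ*₀⟩ = ⟨E*₀ ξ₀, ξ*₀⟩ = b ⟨ξ*₀, ξ*₀⟩`; multiply the two. -/

/-- Nonzero vectors picked from the ranges of the `e j` are linearly independent, hence a basis
when there are as many idempotents as dimensions; `e i` kills all of them but the `i`-th. -/
theorem CompleteOrthogonalIdempotents.rank_eq_one {K : Type*} [Field K] {n ι : Type*}
    [Fintype n] [DecidableEq n] [Fintype ι] {e : ι → Matrix n n K}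
    (he : CompleteOrthogonalIdempotents e) (hne : ∀ i, e i ≠ 0) (hcard : Fintype.card ι = Fintype.card n) (i : ι) :
    (e i).rank = 1 := by
  have hfix : ∀ j, ∃ u : n → K, e j *ᵥ u = u ∧ u ≠ 0 := fun j => by
    obtain ⟨b, hb⟩ : ∃ b, e j *ᵥ Pi.single b 1 ≠ 0 := by
      by_contra! h
      exact hne j (Matrix.ext fun a b => by simpa using congrFun (h b) a)
    exact ⟨_, by rw [mulVec_mulVec, (he.idem j).eq], hb⟩
  choose u hu hu0 using hfix
  have hkill : ∀ j k, j ≠ k → e k *ᵥ u j = 0 := fun j k hjk => by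
    rw [← hu j, mulVec_mulVec, he.ortho hjk.symm, zero_mulVec]
  have hproj : ∀ (c : ι → K) k, e k *ᵥ ∑ j, c j • u j = c k • u k := fun c k => by
    rw [mulVec_sum, Finset.sum_eq_single k (fun j _ hjk => by rw [mulVec_smul, hkill j k hjk,
      smul_zero]) (by simp), mulVec_smul, hu]
  have hli : LinearIndependent K u := Fintype.linearIndependent_iff.2 fun c hc k =>
    (smul_eq_zero.1 (by rw [← hproj, hc, mulVec_zero])).resolve_right (hu0 k)
  have hspan : Submodule.span K (Set.range u) = ⊤ :=
    hli.span_eq_top_of_card_eq_finrank' (by simpa using hcard)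
  have hrange : LinearMap.range (e i).mulVecLin = K ∙ u i := by
    refine le_antisymm ?_ ((Submodule.span_singleton_le_iff_mem _ _).2 ⟨u i, hu i⟩)
    rintro _ ⟨x, rfl⟩
    obtain ⟨c, rfl⟩ :=
      (Submodule.mem_span_range_iff_exists_fun K).1 (hspan ▸ Submodule.mem_top (x := x))
    exact Submodule.mem_span_singleton.2 ⟨c i, (hproj c i).symm⟩
  rw [Matrix.rank, hrange, finrank_span_singleton (hu0 i)]

theorem Matrix.exists_eq_vecMulVec_of_rank_eq_one {K : Type*} [Field K] {m n : Type*} [Fintype n]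
    {M : Matrix m n K} (hM : M.rank = 1) {v : m → K} (hv : v ≠ 0)
    (hvM : v ∈ LinearMap.range M.mulVecLin) : ∃ w, M = vecMulVec v w := by
  classical
  have hrange : LinearMap.range M.mulVecLin = K ∙ v :=
    (Submodule.eq_of_le_of_finrank_le ((Submodule.span_singleton_le_iff_mem _ _).2 hvM)
      (by rw [← Matrix.rank, hM, finrank_span_singleton hv])).symm
  have hcol : ∀ b, ∃ c : K, c • v = M *ᵥ Pi.single b 1 := fun b =>
    Submodule.mem_span_singleton.1 (hrange ▸ ⟨Pi.single b 1, rfl⟩)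
  choose w hw using hcol
  refine ⟨w, Matrix.ext fun a b => ?_⟩
  simpa [vecMulVec_apply, mul_comm] using (congrFun (hw b) a).symm

section FunctionalCalculus

variable {K A ι : Type*} [Field K] [Ring A] [Algebra K A] [Fintype ι] {e : ι → A}

theorem CompleteOrthogonalIdempotents.sum_smul_mul_sum_smul
    (he : CompleteOrthogonalIdempotents e) (a b : ι → K) :
    (∑ i, a i • e i) * (∑ i, b i • e i) = ∑ i, (a i * b i) • e i := by
  classical
  simp_rw [Finset.sum_mul_sum, smul_mul_smul, he.mul_eq, smul_ite, smul_zero,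
    Finset.sum_ite_eq, Finset.mem_univ, if_true]

theorem CompleteOrthogonalIdempotents.aeval_eq_sum_eval_smul
    (he : CompleteOrthogonalIdempotents e) {θ : ι → K} {M : A} (hM : M = ∑ i, θ i • e i)
    (p : K[X]) : aeval M p = ∑ i, p.eval (θ i) • e i := by
  have hpow : ∀ k : ℕ, M ^ k = ∑ i, θ i ^ k • e i := by
    intro k
    induction k with
    | zero => simp [he.complete]
    | succ k ih => simp_rw [pow_succ, ih, hM, he.sum_smul_mul_sum_smul]
  induction p using Polynomial.induction_on' with
  | add p q hp hq => simp only [map_add, hp, hq, eval_add, add_smul, Finset.sum_add_distrib]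
  | monomial k a =>
    simp only [aeval_monomial, ← Algebra.smul_def, hpow, eval_monomial, Finset.smul_sum, mul_smul]

theorem CompleteOrthogonalIdempotents.eq_aeval_lagrange_basis [DecidableEq ι]
    (he : CompleteOrthogonalIdempotents e) {θ : ι → K} (hθ : Function.Injective θ) {M : A}
    (hM : M = ∑ i, θ i • e i) (i : ι) :
    e i = aeval M (Lagrange.basis Finset.univ θ i) := by
  rw [he.aeval_eq_sum_eval_smul hM, Finset.sum_eq_single i
    (fun j _ hji => by rw [Lagrange.eval_basis_of_ne hji.symm (Finset.mem_univ j), zero_smul])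
    (by simp), Lagrange.eval_basis_self hθ.injOn (Finset.mem_univ i), one_smul]

end FunctionalCalculus

section Antimultiplicative

variable {R A : Type*} [CommSemiring R] [Semiring A] [Algebra R A] {σ : A →ₗ[R] A}

theorem LinearMap.map_one_of_antimul (hanti : ∀ X Y, σ (X * Y) = σ Y * σ X)
    (hσ : Function.Surjective σ) : σ 1 = 1 := by
  obtain ⟨X, hX⟩ := hσ 1
  calc σ 1 = σ 1 * σ X := by rw [hX, mul_one]
    _ = 1 := by rw [← hanti, mul_one, hX]

theorem LinearMap.map_aeval_eq_self_of_antimul (hanti : ∀ X Y, σ (X * Y) = σ Y * σ X)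
    (hσ1 : σ 1 = 1) {M : A} (hM : σ M = M) (p : R[X]) : σ (aeval M p) = aeval M p := by
  have hpow : ∀ k : ℕ, σ (M ^ k) = M ^ k := by
    intro k
    induction k with
    | zero => rwa [pow_zero]
    | succ k ih => rw [pow_succ, hanti, hM, ih, (Commute.self_pow M k).eq]
  induction p using Polynomial.induction_on' with
  | add p q hp hq => rw [map_add, map_add, hp, hq]
  | monomial k a => rw [aeval_monomial, ← Algebra.smul_def, map_smul, hpow]

end Antimultiplicative

namespace LeonardSystem

variable {K : Type*} [Field K] {d : ℕ} (L : LeonardSystem K d)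

theorem completeOrthogonalIdempotents_E_s15 : CompleteOrthogonalIdempotents L.E :=
  ⟨OrthogonalIdempotents.iff_mul_eq.2 L.E_mul, L.E_sum⟩

theorem completeOrthogonalIdempotents_Estar : CompleteOrthogonalIdempotents L.Estar :=
  ⟨OrthogonalIdempotents.iff_mul_eq.2 L.Es_mul, L.Es_sum⟩

theorem rank_E (i : Fin (d + 1)) : (L.E i).rank = 1 :=
  L.completeOrthogonalIdempotents_E_s15.rank_eq_one L.E_ne rfl i

theorem rank_Estar (i : Fin (d + 1)) : (L.Estar i).rank = 1 :=
  L.completeOrthogonalIdempotents_Estar.rank_eq_one L.Es_ne rfl i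

variable {σ : Matrix (Fin (d + 1)) (Fin (d + 1)) K →ₗ[K] Matrix (Fin (d + 1)) (Fin (d + 1)) K}

theorem map_E_eq_self (hanti : ∀ X Y, σ (X * Y) = σ Y * σ X) (hσ1 : σ 1 = 1)
    (hA : σ L.A = L.A) (i : Fin (d + 1)) : σ (L.E i) = L.E i := by
  rw [L.completeOrthogonalIdempotents_E_s15.eq_aeval_lagrange_basis L.θ_inj L.A_eq i,
    σ.map_aeval_eq_self_of_antimul hanti hσ1 hA]

theorem map_Estar_eq_self (hanti : ∀ X Y, σ (X * Y) = σ Y * σ X) (hσ1 : σ 1 = 1)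
    (hAs : σ L.Astar = L.Astar) (i : Fin (d + 1)) :
    σ (L.Estar i) = L.Estar i := by
  rw [L.completeOrthogonalIdempotents_Estar.eq_aeval_lagrange_basis L.θs_inj L.As_eq i,
    σ.map_aeval_eq_self_of_antimul hanti hσ1 hAs]

end LeonardSystem

theorem LeonardSystem.bilin_sq_general {K : Type*} [Field K] {d : ℕ}
    (L : LeonardSystem K d)
    (σ : (Matrix (Fin (d+1)) (Fin (d+1)) K) →ₗ[K] Matrix (Fin (d+1)) (Fin (d+1)) K)
    (hanti : ∀ X Y, σ (X * Y) = σ Y * σ X) (hbij : Function.Bijective σ)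
    (hA : σ L.A = L.A) (hAs : σ L.Astar = L.Astar)
    (B : (Fin (d+1) → K) →ₗ[K] (Fin (d+1) → K) →ₗ[K] K)
    (hcomp : ∀ (X : Matrix (Fin (d+1)) (Fin (d+1)) K) (u v : Fin (d+1) → K),
      B (X.mulVec u) v = B u ((σ X).mulVec v))
    (ξ0 ξs0 : Fin (d+1) → K) (hξ0 : ξ0 ≠ 0) (hξs0 : ξs0 ≠ 0)
    (hE0 : (L.E 0).mulVec ξ0 = ξ0) (hEs0 : (L.Estar 0).mulVec ξs0 = ξs0) :
    (B ξ0 ξs0) ^ 2 = (L.E 0 * L.Estar 0).trace * (B ξ0 ξ0 * B ξs0 ξs0) := by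
  have hσ1 : σ 1 = 1 := σ.map_one_of_antimul hanti hbij.2
  obtain ⟨w, hw⟩ := exists_eq_vecMulVec_of_rank_eq_one (L.rank_E 0) hξ0 ⟨ξ0, hE0⟩
  obtain ⟨ws, hws⟩ := exists_eq_vecMulVec_of_rank_eq_one (L.rank_Estar 0) hξs0 ⟨ξs0, hEs0⟩
  set a := w ⬝ᵥ ξs0
  set b := ws ⬝ᵥ ξ0
  have htrace : (L.E 0 * L.Estar 0).trace = a * b := by
    rw [hw, hws, vecMulVec_mul_vecMulVec, trace_vecMulVec, dotProduct_smul, smul_eq_mul,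
      dotProduct_comm ξ0]
  have hB₁ : B ξ0 ξs0 = a * B ξ0 ξ0 :=
    calc B ξ0 ξs0 = B (L.E 0 *ᵥ ξ0) ξs0 := by rw [hE0]
      _ = B ξ0 (L.E 0 *ᵥ ξs0) := by rw [hcomp, L.map_E_eq_self hanti hσ1 hA]
      _ = a * B ξ0 ξ0 := by rw [hw, vecMulVec_mulVec, op_smul_eq_smul, map_smul, smul_eq_mul]
  have hB₂ : B ξ0 ξs0 = b * B ξs0 ξs0 :=
    calc B ξ0 ξs0 = B ξ0 (L.Estar 0 *ᵥ ξs0) := by rw [hEs0]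
      _ = B (L.Estar 0 *ᵥ ξ0) ξs0 := by rw [hcomp, L.map_Estar_eq_self hanti hσ1 hAs]
      _ = b * B ξs0 ξs0 := by
        rw [hws, vecMulVec_mulVec, op_smul_eq_smul, map_smul, LinearMap.smul_apply, smul_eq_mul]
  rw [htrace]
  linear_combination B ξ0 ξs0 * hB₂ + b * B ξs0 ξs0 * hB₁

/-- `⟨ξ_0,ξ*_0⟩² = tr(E_0E*_0) ⟨ξ_0,ξ_0⟩ ⟨ξ*_0,ξ*_0⟩`. -/
theorem LeonardSystem.bilin_sq {K : Type*} [Field K] {d : ℕ}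
    (L : LeonardSystem K d)
    (σ : (Matrix (Fin (d+1)) (Fin (d+1)) K) →ₗ[K] Matrix (Fin (d+1)) (Fin (d+1)) K)
    (hanti : ∀ X Y, σ (X * Y) = σ Y * σ X) (hbij : Function.Bijective σ)
    (hA : σ L.A = L.A) (hAs : σ L.Astar = L.Astar)
    (B : (Fin (d+1) → K) →ₗ[K] (Fin (d+1) → K) →ₗ[K] K) (hB : B ≠ 0)
    (hcomp : ∀ (X : Matrix (Fin (d+1)) (Fin (d+1)) K) (u v : Fin (d+1) → K),
      B (X.mulVec u) v = B u ((σ X).mulVec v))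
    (ξ0 ξs0 : Fin (d+1) → K) (hξ0 : ξ0 ≠ 0) (hξs0 : ξs0 ≠ 0)
    (hE0 : (L.E 0).mulVec ξ0 = ξ0) (hEs0 : (L.Estar 0).mulVec ξs0 = ξs0) :
    (B ξ0 ξs0) ^ 2 = (L.E 0 * L.Estar 0).trace * (B ξ0 ξ0 * B ξs0 ξs0) :=
  LeonardSystem.bilin_sq_general L σ hanti hbij hA hAs B hcomp ξ0 ξs0 hξ0 hξs0 hE0 hEs0
end
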